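/- Let $I, J$ be finite subsets of $\{1,\dots,N\}$ with $|I| = |J| = k$ and $I \neq J$. Write $S = I \cap J$ and $T = I \Delta J$. Then $J \setminus I$ and $I \setminus J$ are nonempty, disjoint, their union is $T$, and if $P \subseteq T$ satisfies $S \cup P \succeq J$ and $S \cup (T\setminus P) \succeq I$ (componentwise order on equal-size subsets), then $P = J \setminus I$. -/

import Mathlib

/-!
Summing the elements, `A ⪯ B` forces `∑ A ≤ ∑ B`, with equality only if `A = B`. The hypotheses
give `∑ J ≤ ∑ (S ∪ P)` and `∑ I ≤ ∑ (S ∪ (T \ P))`, while the right-hand sides have the same union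
`I ∪ J` and the same intersection `S` as `J` and `I`, so by `∑ A + ∑ B = ∑ (A ∪ B) + ∑ (A ∩ B)`
the two sides have equal total. Hence both inequalities are equalities, `J = S ∪ P`, and `P = J \ I`.
-/

/-- Componentwise order on equal-cardinality subsets: `A ⪯ B` iff `a_p ≤ b_p` for all `p`. -/
def finsetCwLe {N : ℕ} (A B : Finset (Fin N)) : Prop :=
  ∃ h : A.card = B.card, ∀ p : Fin A.card,
    A.orderEmbOfFin rfl p ≤ B.orderEmbOfFin h.symm p

theorem Finset.sum_orderEmbOfFin {α M : Type*} [LinearOrder α] [AddCommMonoid M]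
    (s : Finset α) {k : ℕ} (h : s.card = k) (f : α → M) :
    ∑ p, f (s.orderEmbOfFin h p) = ∑ x ∈ s, f x := by
  conv_rhs => rw [← s.map_orderEmbOfFin_univ h, Finset.sum_map]
  rfl

namespace finsetCwLe

variable {N : ℕ} {A B A' B' : Finset (Fin N)}

theorem sum_le_sum {M : Type*} [AddCommMonoid M] [PartialOrder M] [IsOrderedAddMonoid M]
    {f : Fin N → M} (hf : Monotone f) (h : finsetCwLe A B) :
    ∑ x ∈ A, f x ≤ ∑ x ∈ B, f x := by
  obtain ⟨hc, hle⟩ := h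
  rw [← A.sum_orderEmbOfFin rfl, ← B.sum_orderEmbOfFin hc.symm]
  exact Finset.sum_le_sum fun p _ => hf (hle p)

theorem eq_of_sum_le {M : Type*} [AddCommMonoid M] [PartialOrder M] [IsOrderedCancelAddMonoid M]
    {f : Fin N → M} (hf : StrictMono f) (h : finsetCwLe A B)
    (hsum : ∑ x ∈ B, f x ≤ ∑ x ∈ A, f x) : A = B := by
  obtain ⟨hc, hle⟩ := h
  rw [← A.sum_orderEmbOfFin rfl, ← B.sum_orderEmbOfFin hc.symm] at hsum
  have hle_f p (_ : p ∈ Finset.univ) := hf.monotone (hle p)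
  have hf_eq := (Finset.sum_eq_sum_iff_of_le hle_f).mp
    (le_antisymm (Finset.sum_le_sum hle_f) hsum)
  rw [← A.image_orderEmbOfFin_univ rfl, ← B.image_orderEmbOfFin_univ hc.symm]
  exact Finset.image_congr fun p hp => hf.injective (hf_eq p hp)

theorem eq_of_union_eq_of_inter_eq (hA : finsetCwLe A A') (hB : finsetCwLe B B')
    (hunion : A ∪ B = A' ∪ B') (hinter : A ∩ B = A' ∩ B') : A = A' := by
  have hsum : ∑ x ∈ A, (x : ℕ) + ∑ x ∈ B, (x : ℕ) = ∑ x ∈ A', (x : ℕ) + ∑ x ∈ B', (x : ℕ) := by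
    rw [← Finset.sum_union_inter (s₁ := A), ← Finset.sum_union_inter (s₁ := A'), hunion, hinter]
  have hB_le := hB.sum_le_sum Fin.val_strictMono.monotone
  exact hA.eq_of_sum_le Fin.val_strictMono (by omega)

end finsetCwLe

theorem stmt8 (N k : ℕ) (I J : Finset (Fin N))
    (hI : I.card = k) (hJ : J.card = k) (hne : I ≠ J)
    (S T : Finset (Fin N)) (hS : S = I ∩ J) (hT : T = (I \ J) ∪ (J \ I))
    (P : Finset (Fin N)) (hPT : P ⊆ T)
    (h1 : finsetCwLe J (S ∪ P))
    (h2 : finsetCwLe I (S ∪ (T \ P))) :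
    (J \ I).Nonempty ∧ (I \ J).Nonempty ∧ Disjoint (J \ I) (I \ J) ∧
      (J \ I) ∪ (I \ J) = T ∧ P = J \ I := by
  subst hS hT
  have hP x : x ∈ P → x ∈ I \ J ∨ x ∈ J \ I := by simpa using @hPT x
  have hJ_eq : J = I ∩ J ∪ P := by
    refine h1.eq_of_union_eq_of_inter_eq h2 ?_ ?_ <;>
    · ext x
      have := hP x
      simp only [Finset.mem_union, Finset.mem_inter, Finset.mem_sdiff] at this ⊢
      tauto
  have hJI : (J \ I).Nonempty := Finset.sdiff_nonempty.mpr fun hJI =>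
    hne (Finset.eq_of_subset_of_card_le hJI (by omega)).symm
  have hIJ : (I \ J).Nonempty := Finset.sdiff_nonempty.mpr fun hIJ =>
    hne (Finset.eq_of_subset_of_card_le hIJ (by omega))
  refine ⟨hJI, hIJ, disjoint_sdiff_sdiff, Finset.union_comm _ _, ?_⟩
  ext x
  have := hP x
  have hxJ := Finset.ext_iff.mp hJ_eq x
  simp only [Finset.mem_union, Finset.mem_inter, Finset.mem_sdiff] at this hxJ ⊢
  tauto
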